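/- arXiv:2504.04848 — 7 statements merged into one kernel-verified Lean document; each statement's English description precedes it below -/
import Mathlib

section
/- Let X be a real Banach space and let x ∈ S_X. If x is an almost locally uniformly rotund (aLUR) point of S_X, then x is a nicely strongly exposed (NSE) point of S_X, i.e., x is strongly exposed by every functional in its duality set D(x). -/
/-!
If `‖f‖ = 1` and `f (xₙ) → 1` with `‖xₙ‖ ≤ 1`, then `‖xₙ‖ → 1`, so `xₙ` is asymptotic to its
normalization `yₙ = xₙ / ‖xₙ‖` and still `f (yₙ) → 1`. Applying the aLUR condition to the unit
vectors `yₙ` and the constant sequence of functionals `f`, for which `f ((yₙ + x) / 2) → 1`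
because `f x = 1`, gives `yₙ → x`, hence `xₙ → x`.
-/

open Filter Topology NormedSpace

/-- `x` is strongly exposed by the functional `f`: every sequence in the closed unit ball
on which `f` tends to `1` converges in norm to `x`. -/
def StronglyExposedBy {X : Type*} [NormedAddCommGroup X] [NormedSpace ℝ X]
    (x : X) (f : StrongDual ℝ X) : Prop :=
  ∀ xs : ℕ → X, (∀ n, ‖xs n‖ ≤ 1) →
    Tendsto (fun n => f (xs n)) atTop (𝓝 1) → Tendsto xs atTop (𝓝 x)

/-- `x` is a nicely strongly exposed (NSE) point of the unit sphere: it is strongly exposed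
by every norm-one functional attaining the value `1` at `x`. -/
def NSEPoint {X : Type*} [NormedAddCommGroup X] [NormedSpace ℝ X] (x : X) : Prop :=
  ∀ f : StrongDual ℝ X, ‖f‖ = 1 → f x = 1 → StronglyExposedBy x f

/-- `x` is an almost locally uniformly rotund (aLUR) point of the unit sphere. -/
def ALURPoint {X : Type*} [NormedAddCommGroup X] [NormedSpace ℝ X] (x : X) : Prop :=
  ∀ (xs : ℕ → X) (fs : ℕ → StrongDual ℝ X) (α : ℕ → ℝ),
    (∀ n, ‖xs n‖ = 1) → (∀ m, ‖fs m‖ = 1) →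
    (∀ m, Tendsto (fun n => fs m ((2 : ℝ)⁻¹ • (xs n + x))) atTop (𝓝 (α m))) →
    Tendsto α atTop (𝓝 1) →
    Tendsto xs atTop (𝓝 x)

section Normalize

variable {X : Type*} [NormedAddCommGroup X] [NormedSpace ℝ X]

open Classical in
/-- Radial projection onto the unit sphere, sending `0` to the chosen point `x₀`. -/
noncomputable def normalizeOr (x₀ y : X) : X :=
  if y = 0 then x₀ else ‖y‖⁻¹ • y

theorem norm_normalizeOr {x₀ : X} (hx₀ : ‖x₀‖ = 1) (y : X) : ‖normalizeOr x₀ y‖ = 1 := by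
  by_cases hy : y = 0
  · simp [normalizeOr, hy, hx₀]
  · simp [normalizeOr, hy, norm_smul]

theorem norm_sub_normalizeOr {x₀ : X} (hx₀ : ‖x₀‖ = 1) (y : X) :
    ‖y - normalizeOr x₀ y‖ = |‖y‖ - 1| := by
  by_cases hy : y = 0
  · simp [normalizeOr, hy, hx₀]
  · have hy' : ‖y‖ ≠ 0 := norm_ne_zero_iff.mpr hy
    calc ‖y - normalizeOr x₀ y‖ = ‖(1 - ‖y‖⁻¹) • y‖ := by
          simp only [normalizeOr, hy, if_false, sub_smul, one_smul]
      _ = |‖y‖ - 1| := by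
          rw [norm_smul, Real.norm_eq_abs, ← abs_norm y, ← abs_mul, abs_norm,
            sub_mul, inv_mul_cancel₀ hy', one_mul]

theorem tendsto_sub_normalizeOr_zero {x₀ : X} (hx₀ : ‖x₀‖ = 1) {xs : ℕ → X}
    (h : Tendsto (fun n => ‖xs n‖) atTop (𝓝 1)) :
    Tendsto (fun n => xs n - normalizeOr x₀ (xs n)) atTop (𝓝 0) := by
  rw [tendsto_zero_iff_norm_tendsto_zero]
  simp only [norm_sub_normalizeOr hx₀]
  simpa using (h.sub_const 1).abs

end Normalize

theorem tendsto_norm_of_tendsto_apply_one {X : Type*} [NormedAddCommGroup X]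
    [NormedSpace ℝ X] {f : StrongDual ℝ X} (hf : ‖f‖ ≤ 1) {xs : ℕ → X}
    (hxs : ∀ n, ‖xs n‖ ≤ 1) (hlim : Tendsto (fun n => f (xs n)) atTop (𝓝 1)) :
    Tendsto (fun n => ‖xs n‖) atTop (𝓝 1) := by
  refine tendsto_of_tendsto_of_tendsto_of_le_of_le hlim tendsto_const_nhds (fun n => ?_) hxs
  calc f (xs n) ≤ ‖f (xs n)‖ := le_abs_self _
    _ ≤ 1 * ‖xs n‖ := f.le_of_opNorm_le hf _
    _ = ‖xs n‖ := one_mul _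

theorem ALURPoint.tendsto_of_tendsto_apply {X : Type*} [NormedAddCommGroup X]
    [NormedSpace ℝ X] {x : X} (h : ALURPoint x) {f : StrongDual ℝ X} (hf : ‖f‖ = 1)
    (hfx : f x = 1) {ys : ℕ → X} (hys : ∀ n, ‖ys n‖ = 1)
    (hlim : Tendsto (fun n => f (ys n)) atTop (𝓝 1)) : Tendsto ys atTop (𝓝 x) := by
  refine h ys (fun _ => f) (fun _ => 1) hys (fun _ => hf) (fun _ => ?_) tendsto_const_nhds
  have hmid : Tendsto (fun n => (2 : ℝ)⁻¹ * (f (ys n) + 1)) atTop (𝓝 ((2 : ℝ)⁻¹ * (1 + 1))) :=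
    (hlim.add_const 1).const_mul _
  norm_num at hmid
  simpa [hfx, mul_add] using hmid

theorem aLUR_implies_NSE_general {X : Type*} [NormedAddCommGroup X] [NormedSpace ℝ X]
    (x : X) (hx : ‖x‖ = 1) (h : ALURPoint x) : NSEPoint x := by
  intro f hf hfx xs hxs hlim
  set ys := fun n => normalizeOr x (xs n)
  have hsub : Tendsto (fun n => xs n - ys n) atTop (𝓝 0) :=
    tendsto_sub_normalizeOr_zero hx (tendsto_norm_of_tendsto_apply_one hf.le hxs hlim)
  have hfys : Tendsto (fun n => f (ys n)) atTop (𝓝 1) := by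
    simpa using hlim.sub ((f.continuous.tendsto 0).comp hsub)
  have hys : Tendsto ys atTop (𝓝 x) :=
    h.tendsto_of_tendsto_apply hf hfx (fun n => norm_normalizeOr hx (xs n)) hfys
  simpa using hys.add hsub

/-- If `x ∈ S_X` is an aLUR point of `S_X`, then `x` is an NSE point of `S_X`. -/
theorem aLUR_implies_NSE {X : Type*} [NormedAddCommGroup X] [NormedSpace ℝ X]
    [CompleteSpace X] (x : X) (hx : ‖x‖ = 1) (h : ALURPoint x) : NSEPoint x :=
  aLUR_implies_NSE_general x hx h
end

section
/- Let X be a real Banach space and let x ∈ S_X. If x is an almost locally uniformly rotund (aLUR) point of S_X, then x satisfies property aLUR': for every pair of sequences {x_n} ⊂ S_X and {x_m*} ⊂ S_{X*} such that lim_m (liminf_n x_m*((x_n + x)/2)) = 1, the sequence {x_n} converges in norm to x. -/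
open Filter Topology NormedSpace

/-- `x` satisfies property aLUR': whenever
`lim_m (liminf_n x_m*((x_n + x)/2)) = 1`, the sequence `{x_n}` converges in norm to `x`. -/
def ALURPoint' {X : Type*} [NormedAddCommGroup X] [NormedSpace ℝ X] (x : X) : Prop :=
  ∀ (xs : ℕ → X) (fs : ℕ → StrongDual ℝ X),
    (∀ n, ‖xs n‖ = 1) → (∀ m, ‖fs m‖ = 1) →
    Tendsto (fun m => liminf (fun n => fs m ((2 : ℝ)⁻¹ • (xs n + x))) atTop) atTop (𝓝 1) →
    Tendsto xs atTop (𝓝 x)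

/-!
A diagonal argument (sequential compactness of `[-1, 1]^ℕ`) extracts, from any subsequence of
`{x_n}`, a further subsequence along which every `x_m*((x_n + x)/2)` converges, to some
`α_m ≤ 1`. Each `α_m` is a cluster point of `n ↦ x_m*((x_n + x)/2)`, so it dominates the
`liminf`, and hence `α_m → 1`. The aLUR property makes that further subsequence converge to `x`,
and so does the whole sequence.
-/

theorem exists_strictMono_forall_tendsto_of_mem_isCompact {α : Type*} [TopologicalSpace α]
    [FirstCountableTopology α] {K : Set α} (hK : IsCompact K) {u : ℕ → ℕ → α}
    (hu : ∀ m n, u m n ∈ K) :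
    ∃ (a : ℕ → α) (φ : ℕ → ℕ), StrictMono φ ∧
      ∀ m, Tendsto (fun k => u m (φ k)) atTop (𝓝 (a m)) := by
  obtain ⟨a, -, φ, hφ, hlim⟩ :=
    (isCompact_univ_pi fun _ : ℕ => hK).tendsto_subseq (x := fun n m => u m n)
      fun n m _ => hu m n
  exact ⟨a, φ, hφ, tendsto_pi_nhds.mp hlim⟩

theorem apply_half_smul_add_mem_Icc {X : Type*} [SeminormedAddCommGroup X] [NormedSpace ℝ X]
    {f : StrongDual ℝ X} {x y : X} (hf : ‖f‖ ≤ 1) (hx : ‖x‖ ≤ 1) (hy : ‖y‖ ≤ 1) :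
    f ((2 : ℝ)⁻¹ • (y + x)) ∈ Set.Icc (-1 : ℝ) 1 := by
  have hmid : ‖(2 : ℝ)⁻¹ • (y + x)‖ ≤ 1 := by
    rw [norm_smul, norm_inv, Real.norm_ofNat]
    linarith [norm_add_le y x]
  refine abs_le.mp ?_
  calc |f ((2 : ℝ)⁻¹ • (y + x))| ≤ ‖f‖ * ‖(2 : ℝ)⁻¹ • (y + x)‖ := f.le_opNorm _
    _ ≤ 1 := mul_le_one₀ hf (norm_nonneg _) hmid

theorem aLUR_implies_aLUR'_general {X : Type*} [NormedAddCommGroup X] [NormedSpace ℝ X]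
    (x : X) (hx : ‖x‖ = 1) (h : ALURPoint x) : ALURPoint' x := by
  intro xs fs hxs hfs hlim
  have hvalues : ∀ m n, fs m ((2 : ℝ)⁻¹ • (xs n + x)) ∈ Set.Icc (-1 : ℝ) 1 := fun m n =>
    apply_half_smul_add_mem_Icc (hfs m).le hx.le (hxs n).le
  refine tendsto_of_subseq_tendsto fun ns hns => ?_
  obtain ⟨α, φ, hφ, hα⟩ := exists_strictMono_forall_tendsto_of_mem_isCompact isCompact_Icc
    (u := fun m k => fs m ((2 : ℝ)⁻¹ • (xs (ns k) + x))) fun m k => hvalues m (ns k)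
  have hliminf_le : ∀ m, liminf (fun n => fs m ((2 : ℝ)⁻¹ • (xs n + x))) atTop ≤ α m :=
    fun m => (MapClusterPt.of_comp (hns.comp hφ.tendsto_atTop) (hα m).mapClusterPt).liminf_le
      (isBoundedUnder_of ⟨-1, fun n => (hvalues m n).1⟩)
  have hle_one : ∀ m, α m ≤ 1 := fun m =>
    le_of_tendsto' (hα m) fun k => (hvalues m (ns (φ k))).2
  exact ⟨φ, h _ fs α (fun k => hxs _) hfs hα
    (tendsto_of_tendsto_of_tendsto_of_le_of_le hlim tendsto_const_nhds hliminf_le hle_one)⟩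

/-- If `x ∈ S_X` is an aLUR point of `S_X`, then `x` satisfies property aLUR'. -/
theorem aLUR_implies_aLUR' {X : Type*} [NormedAddCommGroup X] [NormedSpace ℝ X]
    [CompleteSpace X] (x : X) (hx : ‖x‖ = 1) (h : ALURPoint x) : ALURPoint' x :=
  aLUR_implies_aLUR'_general x hx h
end

section
/- Let X be a real Banach space and let x ∈ S_X. Then x is an almost locally uniformly rotund (aLUR) point of S_X if and only if x satisfies property aLUR'. -/
open Filter Topology NormedSpace

/-!
A sequence on the unit sphere converges to `x` as soon as each of its subsequences has a
further subsequence converging to `x`. Along any subsequence the values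
`x_m*((x_n + x)/2)` lie in `[-1, 1]`, so by sequential compactness of `[-1, 1]^ℕ` one can
extract a further subsequence along which they converge, for every `m`, to some
`β_m ∈ [-1, 1]`. Each `β_m` dominates the liminf over the whole sequence, so `β_m → 1`,
and the aLUR property applies to that subsequence. The converse is immediate, since a
limit is its own liminf.
-/

theorem exists_strictMono_forall_tendsto_of_mem_Icc {ι : Type*} [Countable ι]
    {u : ℕ → ι → ℝ} {a b : ℝ} (hu : ∀ n i, u n i ∈ Set.Icc a b) :
    ∃ β : ι → ℝ, (∀ i, β i ∈ Set.Icc a b) ∧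
      ∃ φ : ℕ → ℕ, StrictMono φ ∧ ∀ i, Tendsto (fun n => u (φ n) i) atTop (𝓝 (β i)) := by
  obtain ⟨β, hβ, φ, hφ, hlim⟩ :=
    (isCompact_univ_pi fun _ : ι => isCompact_Icc (a := a) (b := b)).tendsto_subseq
      (x := u) fun n i _ => hu n i
  exact ⟨β, fun i => hβ i (Set.mem_univ i), φ, hφ, tendsto_pi_nhds.mp hlim⟩

theorem liminf_le_of_tendsto_comp {ι α : Type*} {f : Filter ι} [f.NeBot] {g : Filter α}
    {u : α → ℝ} {v : ι → α} {b : ℝ} (hu : g.IsBoundedUnder (· ≥ ·) u)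
    (hv : Tendsto v f g) (h : Tendsto (u ∘ v) f (𝓝 b)) : liminf u g ≤ b :=
  h.liminf_eq ▸ hv.liminf_le_liminf_comp h.isCoboundedUnder_ge hu

theorem StrongDual.apply_midpoint_mem_Icc {X : Type*} [SeminormedAddCommGroup X]
    [NormedSpace ℝ X] {f : StrongDual ℝ X} {x y : X} (hf : ‖f‖ ≤ 1) (hx : ‖x‖ ≤ 1)
    (hy : ‖y‖ ≤ 1) : f ((2 : ℝ)⁻¹ • (x + y)) ∈ Set.Icc (-1 : ℝ) 1 := by
  rw [Set.mem_Icc, ← abs_le]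
  calc |f ((2 : ℝ)⁻¹ • (x + y))| ≤ ‖f‖ * ‖(2 : ℝ)⁻¹ • (x + y)‖ := f.le_opNorm _
    _ ≤ 1 * (2⁻¹ * (1 + 1)) := by
      rw [norm_smul, Real.norm_of_nonneg (by norm_num)]
      gcongr
      exact (norm_add_le x y).trans (add_le_add hx hy)
    _ = 1 := by norm_num

section

variable {X : Type*} [NormedAddCommGroup X] [NormedSpace ℝ X] {x : X}

theorem ALURPoint.alurPoint' (hA : ALURPoint x) (hx : ‖x‖ = 1) : ALURPoint' x := by
  intro xs fs hxs hfs hlim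
  have hval : ∀ m n, fs m ((2 : ℝ)⁻¹ • (xs n + x)) ∈ Set.Icc (-1 : ℝ) 1 := fun m n =>
    StrongDual.apply_midpoint_mem_Icc (hfs m).le (hxs n).le hx.le
  refine tendsto_of_subseq_tendsto fun ns hns => ?_
  obtain ⟨β, hβ, φ, hφ, hconv⟩ :=
    exists_strictMono_forall_tendsto_of_mem_Icc fun n m => hval m (ns n)
  have hliminf_le (m : ℕ) : liminf (fun n => fs m ((2 : ℝ)⁻¹ • (xs n + x))) atTop ≤ β m :=
    liminf_le_of_tendsto_comp (isBoundedUnder_of ⟨-1, fun n => (hval m n).1⟩)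
      (hns.comp hφ.tendsto_atTop) (hconv m)
  have hβ_one : Tendsto β atTop (𝓝 1) :=
    tendsto_of_tendsto_of_tendsto_of_le_of_le hlim tendsto_const_nhds hliminf_le
      fun m => (hβ m).2
  exact ⟨φ, hA (fun n => xs (ns (φ n))) fs β (fun n => hxs _) hfs hconv hβ_one⟩

theorem ALURPoint'.alurPoint (hA : ALURPoint' x) : ALURPoint x :=
  fun xs fs _ hxs hfs hlim hα =>
    hA xs fs hxs hfs ((tendsto_congr fun m => (hlim m).liminf_eq).mpr hα)

end

theorem aLUR_iff_aLUR'_general {X : Type*} [NormedAddCommGroup X] [NormedSpace ℝ X]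
    (x : X) (hx : ‖x‖ = 1) : ALURPoint x ↔ ALURPoint' x :=
  ⟨fun h => h.alurPoint' hx, ALURPoint'.alurPoint⟩

/-- `x ∈ S_X` is an aLUR point of `S_X` if and only if `x` satisfies property aLUR'. -/
theorem aLUR_iff_aLUR' {X : Type*} [NormedAddCommGroup X] [NormedSpace ℝ X]
    [CompleteSpace X] (x : X) (hx : ‖x‖ = 1) : ALURPoint x ↔ ALURPoint' x :=
  aLUR_iff_aLUR'_general x hx
end

section
/- Let X be a reflexive real Banach space and let x ∈ S_X. If x is a nicely strongly exposed (NSE) point of S_X, then x is an almost locally uniformly rotund (aLUR) point of S_X. -/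
open Filter Topology NormedSpace

/-! The midpoints `yₙ = (xₙ + x)/2` lie in the unit ball, so along any ultrafilter `U` finer than
`atTop` they converge weakly to some `w`: their images in the bidual have a weak-* cluster point by
Banach–Alaoglu, which comes from `X` by reflexivity. Then `fₘ w = αₘ`, so `‖w‖ ≥ 1`, and a
functional `f` norming `w` satisfies `1 ≤ f w ≤ (1 + f x)/2`, whence `f x = 1`. By NSE, `f` strongly
exposes `x`; since `f yₙ → 1` along `U`, `yₙ → x` along `U`, hence `xₙ → x` along every such `U`. -/

theorem StrongDual.apply_le_norm_mul_norm {X : Type*} [SeminormedAddCommGroup X]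
    [NormedSpace ℝ X] (f : StrongDual ℝ X) (u : X) : f u ≤ ‖f‖ * ‖u‖ :=
  (Real.le_norm_self _).trans (f.le_opNorm u)

section Midpoint

variable {X : Type*} [SeminormedAddCommGroup X] [NormedSpace ℝ X]

theorem norm_inv_two_smul_add_le_one {u v : X} (hu : ‖u‖ ≤ 1) (hv : ‖v‖ ≤ 1) :
    ‖(2 : ℝ)⁻¹ • (u + v)‖ ≤ 1 :=
  calc ‖(2 : ℝ)⁻¹ • (u + v)‖ ≤ 2⁻¹ * (‖u‖ + ‖v‖) := by
        rw [norm_smul, Real.norm_of_nonneg (by norm_num)]; gcongr; exact norm_add_le u v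
    _ ≤ 1 := by linarith

theorem tendsto_of_tendsto_inv_two_smul_add {ι : Type*} {l : Filter ι} {u : ι → X} {x : X}
    (h : Tendsto (fun i => (2 : ℝ)⁻¹ • (u i + x)) l (𝓝 x)) : Tendsto u l (𝓝 x) := by
  have hu : u = fun i => (2 : ℝ) • ((2 : ℝ)⁻¹ • (u i + x)) - x := by
    funext i; module
  simpa [← hu, two_smul] using (h.const_smul (2 : ℝ)).sub_const x

end Midpoint

theorem exists_tendsto_apply_of_surjective_inclusionInDoubleDual {𝕜 E ι : Type*}
    [NontriviallyNormedField 𝕜] [ProperSpace 𝕜] [SeminormedAddCommGroup E] [NormedSpace 𝕜 E]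
    (hrefl : Function.Surjective (inclusionInDoubleDual 𝕜 E)) (U : Ultrafilter ι)
    {y : ι → E} {C : ℝ} (hy : ∀ i, ‖y i‖ ≤ C) :
    ∃ w : E, ∀ f : StrongDual 𝕜 E, Tendsto (fun i => f (y i)) U (𝓝 (f w)) := by
  let Y : ι → WeakDual 𝕜 (StrongDual 𝕜 E) :=
    fun i => StrongDual.toWeakDual (inclusionInDoubleDual 𝕜 E (y i))
  obtain ⟨Φ, -, hΦ⟩ := (WeakDual.isCompact_closedBall 0 C).ultrafilter_le_nhds (U.map Y) <| by
    rw [Ultrafilter.coe_map, le_principal_iff]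
    refine mem_map.mpr <| Eventually.of_forall fun i => ?_
    simpa [Y] using (double_dual_bound 𝕜 E (y i)).trans (hy i)
  obtain ⟨w, hw⟩ := hrefl (WeakDual.toStrongDual Φ)
  refine ⟨w, fun f => ?_⟩
  rw [← dual_def 𝕜 E w f, hw]
  exact ((WeakDual.eval_continuous f).tendsto Φ).comp hΦ

namespace StronglyExposedBy

variable {X : Type*} [NormedAddCommGroup X] [NormedSpace ℝ X] {x : X} {f : StrongDual ℝ X}

theorem exists_pos_forall_norm_sub_lt (hse : StronglyExposedBy x f) (hf : ‖f‖ ≤ 1) {ε : ℝ}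
    (hε : 0 < ε) :
    ∃ δ > 0, ∀ u : X, ‖u‖ ≤ 1 → 1 - δ < f u → ‖u - x‖ < ε := by
  by_contra! hcon
  choose u hu_norm hu_apply hu_far using fun k : ℕ => hcon (1 / (k + 1)) Nat.one_div_pos_of_nat
  have hfu : Tendsto (fun k => f (u k)) atTop (𝓝 1) := by
    refine tendsto_of_tendsto_of_tendsto_of_le_of_le ?_ tendsto_const_nhds
      (fun k => (hu_apply k).le) fun k => ?_
    · simpa using tendsto_const_nhds.sub (tendsto_one_div_add_atTop_nhds_zero_nat (𝕜 := ℝ))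
    · exact (StrongDual.apply_le_norm_mul_norm f (u k)).trans
        (mul_le_one₀ hf (norm_nonneg _) (hu_norm k))
  obtain ⟨k, hk⟩ := ((hse u hu_norm hfu).eventually (Metric.ball_mem_nhds x hε)).exists
  exact (hu_far k).not_gt (by rwa [← dist_eq_norm])

theorem tendsto_of_tendsto_apply (hse : StronglyExposedBy x f) (hf : ‖f‖ ≤ 1) {ι : Type*}
    {l : Filter ι} {u : ι → X} (hu : ∀ i, ‖u i‖ ≤ 1)
    (hfu : Tendsto (fun i => f (u i)) l (𝓝 1)) : Tendsto u l (𝓝 x) := by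
  refine Metric.tendsto_nhds.mpr fun ε hε => ?_
  obtain ⟨δ, hδ, hδε⟩ := hse.exists_pos_forall_norm_sub_lt hf hε
  filter_upwards [hfu.eventually (eventually_gt_nhds (sub_lt_self 1 hδ))] with i hi
  rw [dist_eq_norm]
  exact hδε _ (hu i) hi

end StronglyExposedBy

theorem NSE_implies_aLUR_of_reflexive_general {X : Type*} [NormedAddCommGroup X] [NormedSpace ℝ X]
    (hrefl : Function.Surjective ⇑(inclusionInDoubleDual ℝ X))
    (x : X) (hx : ‖x‖ = 1) (h : NSEPoint x) : ALURPoint x := by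
  intro xs fs α hxs hfs hlim hα
  set y : ℕ → X := fun n => (2 : ℝ)⁻¹ • (xs n + x) with hy_def
  have hy : ∀ n, ‖y n‖ ≤ 1 := fun n => norm_inv_two_smul_add_le_one (hxs n).le hx.le
  refine tendsto_of_tendsto_inv_two_smul_add <| tendsto_iff_ultrafilter _ _ _ |>.mpr fun U hU => ?_
  obtain ⟨w, hw⟩ := exists_tendsto_apply_of_surjective_inclusionInDoubleDual hrefl U hy
  have hαw : ∀ m, α m = fs m w := fun m =>
    tendsto_nhds_unique ((hlim m).mono_left hU) (hw (fs m))
  have one_le_norm_w : 1 ≤ ‖w‖ := le_of_tendsto' hα fun m => by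
    simpa [hαw m, hfs m] using StrongDual.apply_le_norm_mul_norm (fs m) w
  obtain ⟨f, hf, hfw⟩ := exists_dual_vector ℝ w (by positivity)
  have hfy : ∀ n, f (y n) ≤ (1 + f x) / 2 := fun n => by
    have := StrongDual.apply_le_norm_mul_norm f (xs n)
    simp only [hy_def, map_smul, map_add, smul_eq_mul, hf, hxs n] at this ⊢
    linarith
  have hfx : f x ≤ 1 := by simpa [hf, hx] using StrongDual.apply_le_norm_mul_norm f x
  have norm_w_le : ‖w‖ ≤ (1 + f x) / 2 := le_of_tendsto' (hfw ▸ hw f) hfy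
  have hfx_eq : f x = 1 := by linarith
  have hfy_lim : Tendsto (fun n => f (y n)) U (𝓝 1) := by
    simpa [hfw, show ‖w‖ = 1 by linarith] using hw f
  exact (h f hf hfx_eq).tendsto_of_tendsto_apply hf.le hy hfy_lim

/-- In a reflexive Banach space, every NSE point of the unit sphere is an aLUR point. -/
theorem NSE_implies_aLUR_of_reflexive {X : Type*} [NormedAddCommGroup X] [NormedSpace ℝ X]
    [CompleteSpace X]
    (hrefl : Function.Surjective ⇑(inclusionInDoubleDual ℝ X))
    (x : X) (hx : ‖x‖ = 1) (h : NSEPoint x) : ALURPoint x :=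
  NSE_implies_aLUR_of_reflexive_general hrefl x hx h
end

section
/- Let X be a real Banach space and let x ∈ S_X. If x is a nicely strongly exposed (NSE) point of S_X, then x satisfies the following Pringsheim double-limit property: for every pair of sequences {x_n} ⊂ S_X and {x_m*} ⊂ S_{X*} such that for every ε > 0 there exists n₀ ∈ ℕ with x_m*((x_n + x)/2) > 1 − ε whenever n, m ≥ n₀, the sequence {x_n} converges in norm to x. -/
open Filter Topology NormedSpace

/-!
Pass to a weak-* cluster point `f` of `(x_m*)` along an ultrafilter; it has norm at most one.
Both `x_m*(x_n)` and `x_m*(x)` are at most one while their average tends to one, so each of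
them tends to one. Hence `f x = 1`, so `f ∈ D(x)`, and `f (x_n) → 1`; since `x` is strongly
exposed by `f`, `x_n → x`.
-/

theorem StrongDual.exists_ultrafilter_tendsto_apply {𝕜 E ι : Type*} [NontriviallyNormedField 𝕜]
    [ProperSpace 𝕜] [NormedAddCommGroup E] [NormedSpace 𝕜 E] (l : Filter ι) [l.NeBot]
    (fs : ι → StrongDual 𝕜 E) {r : ℝ} (hfs : ∀ i, ‖fs i‖ ≤ r) :
    ∃ U : Ultrafilter ι, ↑U ≤ l ∧ ∃ f : StrongDual 𝕜 E, ‖f‖ ≤ r ∧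
      ∀ z, Tendsto (fun i => fs i z) U (𝓝 (f z)) := by
  set U := Ultrafilter.of l
  set K := WeakDual.toStrongDual ⁻¹' Metric.closedBall (0 : StrongDual 𝕜 E) r
  have hUK : (U.map (fun i => StrongDual.toWeakDual (fs i)) : Filter (WeakDual 𝕜 E)) ≤
      𝓟 K := by
    rw [le_principal_iff, Ultrafilter.mem_coe, Ultrafilter.mem_map]
    exact univ_mem' fun i => by simpa [K] using hfs i
  obtain ⟨g, hgK, hg⟩ := (WeakDual.isCompact_closedBall 0 r).ultrafilter_le_nhds _ hUK
  refine ⟨U, Ultrafilter.of_le l, WeakDual.toStrongDual g, by simpa [K] using hgK, fun z => ?_⟩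
  exact ((WeakDual.eval_continuous z).tendsto g).comp hg

theorem tendsto_nhds_one_of_le_one {ι : Type*} {l : Filter ι} {a : ι → ℝ}
    (hle : ∀ᶠ i in l, a i ≤ 1) (hge : ∀ ε > 0, ∀ᶠ i in l, 1 - ε ≤ a i) :
    Tendsto a l (𝓝 1) := by
  refine tendsto_order.2 ⟨fun b hb => ?_, fun b hb => ?_⟩
  · filter_upwards [hge ((1 - b) / 2) (by linarith)] with i hi
    linarith
  · filter_upwards [hle] with i hi
    linarith

theorem StrongDual.apply_le_one {X : Type*} [NormedAddCommGroup X] [NormedSpace ℝ X]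
    {f : StrongDual ℝ X} {z : X} (hf : ‖f‖ ≤ 1) (hz : ‖z‖ ≤ 1) : f z ≤ 1 :=
  (le_abs_self _).trans <| (f.le_opNorm z).trans (mul_le_one₀ hf (norm_nonneg z) hz)

theorem StrongDual.one_sub_lt_apply_of_one_sub_half_lt_apply_midpoint {X : Type*}
    [NormedAddCommGroup X] [NormedSpace ℝ X] {f : StrongDual ℝ X} {y z : X} {ε : ℝ}
    (hf : ‖f‖ ≤ 1) (hy : ‖y‖ ≤ 1) (hz : ‖z‖ ≤ 1) (h : 1 - ε / 2 < f ((2 : ℝ)⁻¹ • (y + z))) :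
    1 - ε < f y ∧ 1 - ε < f z := by
  have hfy := f.apply_le_one hf hy
  have hfz := f.apply_le_one hf hz
  rw [map_smul, map_add, smul_eq_mul] at h
  constructor <;> linarith

theorem NSE_implies_pringsheim_general {X : Type*} [NormedAddCommGroup X] [NormedSpace ℝ X]
    (x : X) (hx : ‖x‖ = 1) (h : NSEPoint x) :
    ∀ (xs : ℕ → X) (fs : ℕ → StrongDual ℝ X),
      (∀ n, ‖xs n‖ = 1) → (∀ m, ‖fs m‖ = 1) →
      (∀ ε > (0 : ℝ), ∃ n₀ : ℕ, ∀ n m : ℕ, n₀ ≤ n → n₀ ≤ m →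
        1 - ε < fs m ((2 : ℝ)⁻¹ • (xs n + x))) →
      Tendsto xs atTop (𝓝 x) := by
  intro xs fs hxs hfs hP
  have hsep : ∀ ε > (0 : ℝ), ∃ n₀ : ℕ, ∀ n m : ℕ, n₀ ≤ n → n₀ ≤ m →
      1 - ε < fs m (xs n) ∧ 1 - ε < fs m x := fun ε hε => by
    obtain ⟨n₀, hn₀⟩ := hP (ε / 2) (half_pos hε)
    exact ⟨n₀, fun n m hn hm => (fs m).one_sub_lt_apply_of_one_sub_half_lt_apply_midpoint
      (hfs m).le (hxs n).le hx.le (hn₀ n m hn hm)⟩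
  obtain ⟨U, hU, f, hf, hfs_lim⟩ :=
    StrongDual.exists_ultrafilter_tendsto_apply atTop fs fun m => (hfs m).le
  have hfx : f x = 1 := by
    refine tendsto_nhds_unique (hfs_lim x) (tendsto_nhds_one_of_le_one ?_ fun ε hε => ?_)
    · exact .of_forall fun m => (fs m).apply_le_one (hfs m).le hx.le
    · obtain ⟨n₀, hn₀⟩ := hsep ε hε
      filter_upwards [hU (eventually_ge_atTop n₀)] with m hm
      exact (hn₀ n₀ m le_rfl hm).2.le
  have hf_norm : ‖f‖ = 1 :=
    le_antisymm hf (by simpa [hfx, hx] using f.le_opNorm x)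
  have hf_xs : Tendsto (fun n => f (xs n)) atTop (𝓝 1) := by
    refine tendsto_nhds_one_of_le_one (.of_forall fun n => f.apply_le_one hf (hxs n).le)
      fun ε hε => ?_
    obtain ⟨n₀, hn₀⟩ := hsep ε hε
    filter_upwards [eventually_ge_atTop n₀] with n hn
    refine ge_of_tendsto (hfs_lim (xs n)) ?_
    filter_upwards [hU (eventually_ge_atTop n₀)] with m hm
    exact (hn₀ n m hn hm).1.le
  exact h f hf_norm hfx xs (fun n => (hxs n).le) hf_xs

/-- If `x ∈ S_X` is an NSE point, then for all sequences `{x_n} ⊂ S_X`, `{x_m*} ⊂ S_{X*}`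
satisfying the Pringsheim double-limit condition
`lim_{m,n} x_m*((x_n + x)/2) = 1`, the sequence `{x_n}` converges in norm to `x`. -/
theorem NSE_implies_pringsheim {X : Type*} [NormedAddCommGroup X] [NormedSpace ℝ X]
    [CompleteSpace X] (x : X) (hx : ‖x‖ = 1) (h : NSEPoint x) :
    ∀ (xs : ℕ → X) (fs : ℕ → StrongDual ℝ X),
      (∀ n, ‖xs n‖ = 1) → (∀ m, ‖fs m‖ = 1) →
      (∀ ε > (0 : ℝ), ∃ n₀ : ℕ, ∀ n m : ℕ, n₀ ≤ n → n₀ ≤ m →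
        1 - ε < fs m ((2 : ℝ)⁻¹ • (xs n + x))) →
      Tendsto xs atTop (𝓝 x) :=
  NSE_implies_pringsheim_general x hx h
end

section
/- Let X be a real Banach space and let x ∈ S_X. Suppose that for every pair of sequences {x_n} ⊂ S_X and {x_m*} ⊂ S_{X*} satisfying the Pringsheim condition (for every ε > 0 there exists n₀ ∈ ℕ with x_m*((x_n + x)/2) > 1 − ε whenever n, m ≥ n₀) the sequence {x_n} converges in norm to x. Then x is a nicely strongly exposed (NSE) point of S_X. -/
open Filter Topology NormedSpace

/-!
Let `f` be a norm-one functional with `f x = 1` and `xs` a sequence in the unit ball with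
`f (xs n) → 1`. Then `‖xs n‖ → 1`, and the normalized vectors `ys n = xs n / ‖xs n‖` still
satisfy `f (ys n) → 1`, because `f (xs n) ≤ f (ys n) ≤ 1` once `f (xs n) ≥ 0`. So
`f ((ys n + x) / 2) = (f (ys n) + 1) / 2 → 1`: the pair `ys`, `fun _ ↦ f` satisfies the Pringsheim
condition, whence `ys n → x` and `xs n = ‖xs n‖ • ys n → x`.
-/

section

variable {X : Type*} [NormedAddCommGroup X] [NormedSpace ℝ X]

def PringsheimCondition (x : X) (xs : ℕ → X) (fs : ℕ → StrongDual ℝ X) : Prop :=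
  ∀ ε > (0 : ℝ), ∃ n₀ : ℕ, ∀ n m : ℕ, n₀ ≤ n → n₀ ≤ m →
    1 - ε < fs m ((2 : ℝ)⁻¹ • (xs n + x))

theorem pringsheimCondition_const {x : X} {ys : ℕ → X} {f : StrongDual ℝ X} (hfx : f x = 1)
    (hys : Tendsto (fun n ↦ f (ys n)) atTop (𝓝 1)) :
    PringsheimCondition x ys fun _ ↦ f := by
  have hmid : Tendsto (fun n ↦ f ((2 : ℝ)⁻¹ • (ys n + x))) atTop (𝓝 1) := by
    simp only [map_smul, map_add, hfx, smul_eq_mul]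
    convert (hys.add_const 1).const_mul (2 : ℝ)⁻¹ using 2
    norm_num
  intro ε hε
  obtain ⟨n₀, hn₀⟩ :=
    eventually_atTop.mp (hmid.eventually (eventually_gt_nhds (sub_lt_self 1 hε)))
  exact ⟨n₀, fun n _ hn _ ↦ hn₀ n hn⟩

theorem StrongDual.apply_le_norm {f : StrongDual ℝ X} (hf : ‖f‖ ≤ 1) (z : X) : f z ≤ ‖z‖ :=
  (le_abs_self _).trans (by simpa using f.le_of_opNorm_le hf z)

theorem norm_inv_norm_smul_le_one (y : X) : ‖‖y‖⁻¹ • y‖ ≤ 1 := by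
  rcases eq_or_ne y 0 with rfl | hy
  · simp
  · exact (norm_smul_inv_norm (𝕜 := ℝ) hy).le

theorem StrongDual.apply_le_apply_inv_norm_smul (f : StrongDual ℝ X) {y : X} (hy : ‖y‖ ≤ 1)
    (hfy : 0 ≤ f y) : f y ≤ f (‖y‖⁻¹ • y) := by
  rcases eq_or_ne y 0 with rfl | hy₀
  · simp
  · rw [map_smul, smul_eq_mul]
    exact le_mul_of_one_le_left hfy ((one_le_inv₀ (norm_pos_iff.mpr hy₀)).mpr hy)

variable {f : StrongDual ℝ X} {xs : ℕ → X}

theorem tendsto_norm_of_tendsto_apply (hf : ‖f‖ ≤ 1) (hxs : ∀ n, ‖xs n‖ ≤ 1)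
    (hto : Tendsto (fun n ↦ f (xs n)) atTop (𝓝 1)) :
    Tendsto (fun n ↦ ‖xs n‖) atTop (𝓝 1) :=
  tendsto_of_tendsto_of_tendsto_of_le_of_le hto tendsto_const_nhds
    (fun n ↦ f.apply_le_norm hf (xs n)) hxs

theorem tendsto_apply_inv_norm_smul_of_tendsto_apply (hf : ‖f‖ ≤ 1) (hxs : ∀ n, ‖xs n‖ ≤ 1)
    (hto : Tendsto (fun n ↦ f (xs n)) atTop (𝓝 1)) :
    Tendsto (fun n ↦ f (‖xs n‖⁻¹ • xs n)) atTop (𝓝 1) := by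
  refine tendsto_of_tendsto_of_tendsto_of_le_of_le' hto tendsto_const_nhds ?_ ?_
  · filter_upwards [hto.eventually (eventually_ge_nhds zero_lt_one)] with n hn
    exact f.apply_le_apply_inv_norm_smul (hxs n) hn
  · exact Eventually.of_forall fun n ↦
      (f.apply_le_norm hf _).trans (norm_inv_norm_smul_le_one _)

end

theorem pringsheim_implies_NSE_general {X : Type*} [NormedAddCommGroup X] [NormedSpace ℝ X]
    (x : X) (hx : ‖x‖ = 1)
    (h : ∀ (xs : ℕ → X) (fs : ℕ → StrongDual ℝ X),
      (∀ n, ‖xs n‖ = 1) → (∀ m, ‖fs m‖ = 1) →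
      (∀ ε > (0 : ℝ), ∃ n₀ : ℕ, ∀ n m : ℕ, n₀ ≤ n → n₀ ≤ m →
        1 - ε < fs m ((2 : ℝ)⁻¹ • (xs n + x))) →
      Tendsto xs atTop (𝓝 x)) :
    NSEPoint x := by
  classical
  intro f hf hfx xs hxs hto
  set ys : ℕ → X := fun n ↦ if xs n = 0 then x else ‖xs n‖⁻¹ • xs n
  have hys_norm (n : ℕ) : ‖ys n‖ = 1 := by
    by_cases h₀ : xs n = 0
    · simpa [ys, h₀] using hx
    · simpa [ys, h₀] using norm_smul_inv_norm (𝕜 := ℝ) h₀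
  have hxs_ne : ∀ᶠ n in atTop, xs n ≠ 0 :=
    (hto.eventually (eventually_gt_nhds one_pos)).mono fun n hn h₀ ↦ by simp [h₀] at hn
  have hys_eq : (fun n ↦ ‖xs n‖⁻¹ • xs n) =ᶠ[atTop] ys :=
    hxs_ne.mono fun n hn ↦ by simp [ys, hn]
  have hys : Tendsto ys atTop (𝓝 x) :=
    h ys (fun _ ↦ f) hys_norm (fun _ ↦ hf) <| pringsheimCondition_const hfx <|
      (tendsto_apply_inv_norm_smul_of_tendsto_apply hf.le hxs hto).congr' <|
        hys_eq.fun_comp f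
  have hlim : Tendsto (fun n ↦ ‖xs n‖ • ys n) atTop (𝓝 x) := by
    simpa using (tendsto_norm_of_tendsto_apply hf.le hxs hto).smul hys
  refine hlim.congr' ?_
  filter_upwards [hxs_ne] with n hn
  simp [ys, hn, smul_inv_smul₀ (norm_ne_zero_iff.mpr hn)]

/-- If, for all sequences `{x_n} ⊂ S_X`, `{x_m*} ⊂ S_{X*}` satisfying the Pringsheim
double-limit condition `lim_{m,n} x_m*((x_n + x)/2) = 1`, the sequence `{x_n}` converges in
norm to `x`, then `x ∈ S_X` is an NSE point of `S_X`. -/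
theorem pringsheim_implies_NSE {X : Type*} [NormedAddCommGroup X] [NormedSpace ℝ X]
    [CompleteSpace X] (x : X) (hx : ‖x‖ = 1)
    (h : ∀ (xs : ℕ → X) (fs : ℕ → StrongDual ℝ X),
      (∀ n, ‖xs n‖ = 1) → (∀ m, ‖fs m‖ = 1) →
      (∀ ε > (0 : ℝ), ∃ n₀ : ℕ, ∀ n m : ℕ, n₀ ≤ n → n₀ ≤ m →
        1 - ε < fs m ((2 : ℝ)⁻¹ • (xs n + x))) →
      Tendsto xs atTop (𝓝 x)) :
    NSEPoint x :=
  pringsheim_implies_NSE_general x hx h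
end

section
/- Let (X,‖·‖) be a real Banach space and let B ⊂ X be a convex, symmetric, norm-compact subset of X such that the set D = conv(B_{(X,‖·‖)} ∪ B) is the closed unit ball of a norm |||·||| on X equivalent to ‖·‖. Then, identifying X with its canonical image in the bidual X**, the closed unit ball of the bidual norm |||·|||** on X** equals conv(B_{(X**,‖·‖**)} ∪ B), where ‖·‖** denotes the bidual norm of ‖·‖. -/
open Filter Topology NormedSpace

/-- `N` is a norm on `Z` equivalent to the original norm of `Z`. -/
structure IsEquivNorm {Z : Type*} [NormedAddCommGroup Z] [NormedSpace ℝ Z]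
    (N : Z → ℝ) : Prop where
  add_le : ∀ x y : Z, N (x + y) ≤ N x + N y
  smul_eq : ∀ (a : ℝ) (x : Z), N (a • x) = |a| * N x
  lower : ∃ c > (0 : ℝ), ∀ x : Z, c * ‖x‖ ≤ N x
  upper : ∃ C > (0 : ℝ), ∀ x : Z, N x ≤ C * ‖x‖

/-!
With `j : X → X**` the canonical embedding, `D = conv(B_X ∪ B)` has image
`j D = conv(j B_X ∪ j B)`. By Goldstine's theorem the weak* closure of `j B_X` is `B_{X**}`,
so the weak* closure of `j D` contains `conv(B_{X**} ∪ j B)`. Conversely, `B_{X**}` is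
weak* compact (Banach–Alaoglu) and `j B` is weak* compact, and the convex hull of the union of
two convex compact sets is compact, being a continuous image of `[0, 1] × K₁ × K₂`; hence
`conv(B_{X**} ∪ j B)` is weak* closed and contains `j D`.
-/

open Set Metric

section ConvexJoin

variable {E : Type*} [AddCommGroup E] [Module ℝ E] [TopologicalSpace E] [ContinuousAdd E]
  [ContinuousSMul ℝ E] {s t : Set E}

theorem IsCompact.convexJoin (hs : IsCompact s) (ht : IsCompact t) :
    IsCompact (_root_.convexJoin ℝ s t) := by
  have hjoin : _root_.convexJoin ℝ s t =
      (fun p : ℝ × E × E => (1 - p.1) • p.2.1 + p.1 • p.2.2) '' (Icc (0 : ℝ) 1 ×ˢ s ×ˢ t) := by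
    ext x
    simp only [mem_convexJoin, mem_image, mem_prod, segment_eq_image ℝ, Prod.exists]
    constructor
    · rintro ⟨a, ha, b, hb, θ, hθ, rfl⟩
      exact ⟨θ, a, b, ⟨hθ, ha, hb⟩, rfl⟩
    · rintro ⟨θ, a, b, ⟨hθ, ha, hb⟩, rfl⟩
      exact ⟨a, ha, b, hb, θ, hθ, rfl⟩
  rw [hjoin]
  exact (isCompact_Icc.prod (hs.prod ht)).image (by fun_prop)

theorem IsCompact.convexHull_union (hs : IsCompact s) (ht : IsCompact t) (hs_conv : Convex ℝ s)
    (ht_conv : Convex ℝ t) : IsCompact (convexHull ℝ (s ∪ t)) := by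
  rcases s.eq_empty_or_nonempty with rfl | hs_ne
  · rwa [empty_union, ht_conv.convexHull_eq]
  rcases t.eq_empty_or_nonempty with rfl | ht_ne
  · rwa [union_empty, hs_conv.convexHull_eq]
  rw [hs_conv.convexHull_union ht_conv hs_ne ht_ne]
  exact hs.convexJoin ht

end ConvexJoin

theorem WeakDual.exists_eq_eval {𝕜 E : Type*} [NontriviallyNormedField 𝕜] [AddCommGroup E]
    [TopologicalSpace E] [Module 𝕜 E] (f : StrongDual 𝕜 (WeakDual 𝕜 E)) :
    ∃ y : E, ∀ Ψ : WeakDual 𝕜 E, f Ψ = Ψ y := by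
  obtain ⟨y, hy⟩ := LinearMap.dualEmbedding_surjective (topDualPairing 𝕜 E)
    (f : StrongDual 𝕜 (WeakBilin (topDualPairing 𝕜 E)))
  exact ⟨y, fun Ψ => by rw [← hy]; rfl⟩

instance WeakDual.instLocallyConvexSpace (E : Type*) [AddCommGroup E] [TopologicalSpace E]
    [Module ℝ E] : LocallyConvexSpace ℝ (WeakDual ℝ E) :=
  WeakBilin.locallyConvexSpace

theorem StrongDual.norm_le_of_forall_closedBall_lt {X : Type*} [SeminormedAddCommGroup X]
    [NormedSpace ℝ X] {y : StrongDual ℝ X} {u : ℝ}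
    (h : ∀ x ∈ closedBall (0 : X) 1, y x < u) : ‖y‖ ≤ u := by
  have hu : 0 < u := by simpa using h 0 (by simp)
  refine y.opNorm_le_of_unit_norm hu.le fun x hx => abs_le.2 ⟨?_, ?_⟩
  · have := h (-x) (by simp [hx])
    rw [map_neg] at this
    linarith
  · exact (h x (by simp [hx])).le

namespace NormedSpace

variable {X : Type*} [NormedAddCommGroup X] [NormedSpace ℝ X]

variable (X) in
noncomputable def inclusionInWeakBidual : X →L[ℝ] WeakDual ℝ (StrongDual ℝ X) :=
  ⟨StrongDual.toWeakDual.toLinearMap ∘ₗ (inclusionInDoubleDual ℝ X).toLinearMap,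
    Dual.toWeakDual_continuous.comp (inclusionInDoubleDual ℝ X).continuous⟩

theorem isCompact_toWeakDual_closedBall (x' : StrongDual ℝ X) (r : ℝ) :
    IsCompact (StrongDual.toWeakDual '' closedBall x' r) := by
  rw [LinearEquiv.image_eq_preimage_symm]
  exact WeakDual.isCompact_closedBall x' r

theorem inclusionInWeakBidual_image_closedBall_subset :
    inclusionInWeakBidual X '' closedBall 0 1 ⊆
      StrongDual.toWeakDual '' closedBall (0 : StrongDual ℝ (StrongDual ℝ X)) 1 := by
  rintro _ ⟨x, hx, rfl⟩
  refine ⟨inclusionInDoubleDual ℝ X x, ?_, rfl⟩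
  rw [mem_closedBall_zero_iff] at hx
  exact (mem_closedBall_zero_iff (E := StrongDual ℝ (StrongDual ℝ X))).2
    ((double_dual_bound ℝ X x).trans hx)

theorem goldstine :
    StrongDual.toWeakDual '' closedBall (0 : StrongDual ℝ (StrongDual ℝ X)) 1 ⊆
      closure (inclusionInWeakBidual X '' closedBall 0 1) := by
  rintro _ ⟨Φ, hΦ, rfl⟩
  by_contra hΦ_notMem
  have hconv : Convex ℝ (closure (inclusionInWeakBidual X '' closedBall 0 1)) :=
    Convex.closure (E := WeakDual ℝ (StrongDual ℝ X))
      ((convex_closedBall (0 : X) 1).linear_image (inclusionInWeakBidual X).toLinearMap)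
  obtain ⟨f, u, hf, hfΦ⟩ := geometric_hahn_banach_closed_point hconv isClosed_closure hΦ_notMem
  obtain ⟨y, hfy⟩ := WeakDual.exists_eq_eval f
  have hy : ‖y‖ ≤ u := StrongDual.norm_le_of_forall_closedBall_lt fun x hx => by
    have := hf _ (subset_closure (mem_image_of_mem _ hx))
    rwa [hfy] at this
  rw [hfy] at hfΦ
  have hΦ' : ‖Φ‖ ≤ 1 := (mem_closedBall_zero_iff (E := StrongDual ℝ (StrongDual ℝ X))).1 hΦ
  have hΦy : Φ y ≤ u := calc
    Φ y ≤ ‖Φ‖ * ‖y‖ := (le_abs_self _).trans (Φ.le_opNorm y)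
    _ ≤ 1 * u := mul_le_mul hΦ' hy (norm_nonneg _) zero_le_one
    _ = u := one_mul u
  exact hΦy.not_gt hfΦ

end NormedSpace

theorem bidual_ball_of_renorming_general {X : Type*} [NormedAddCommGroup X] [NormedSpace ℝ X]
    (B : Set X) (hBconv : Convex ℝ B)
    (hBcpt : IsCompact B) (N : X → ℝ)
    (hD : {x : X | N x ≤ 1} = convexHull ℝ (Metric.closedBall 0 1 ∪ B)) :
    closure ((fun x : X => StrongDual.toWeakDual (inclusionInDoubleDual ℝ X x)) ''
        {x : X | N x ≤ 1}) =
      convexHull ℝ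
        ((⇑StrongDual.toWeakDual '' Metric.closedBall (0 : StrongDual ℝ (StrongDual ℝ X)) 1) ∪
          ((fun x : X => StrongDual.toWeakDual (inclusionInDoubleDual ℝ X x)) '' B)) := by
  set j := inclusionInWeakBidual X
  set K := StrongDual.toWeakDual '' closedBall (0 : StrongDual ℝ (StrongDual ℝ X)) 1
  change closure (j '' _) = convexHull ℝ (K ∪ j '' B)
  have hjD : j '' {x | N x ≤ 1} = convexHull ℝ (j '' closedBall 0 1 ∪ j '' B) := by
    rw [hD, ← image_union]
    exact j.toLinearMap.image_convexHull _
  apply le_antisymm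
  · have hK_conv : Convex ℝ K :=
      (convex_closedBall (0 : StrongDual ℝ (StrongDual ℝ X)) 1).linear_image
        (StrongDual.toWeakDual (𝕜 := ℝ) (E := StrongDual ℝ X)).toLinearMap
    have hjB_conv : Convex ℝ (j '' B) := hBconv.linear_image j.toLinearMap
    refine closure_minimal ?_ ((isCompact_toWeakDual_closedBall 0 1).convexHull_union
      (hBcpt.image j.continuous) hK_conv hjB_conv).isClosed
    rw [hjD]
    exact convexHull_mono (union_subset_union inclusionInWeakBidual_image_closedBall_subset le_rfl)
  · rw [hjD]
    have hconv : Convex ℝ (closure (convexHull ℝ (j '' closedBall 0 1 ∪ j '' B))) :=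
      Convex.closure (E := WeakDual ℝ (StrongDual ℝ X)) (convex_convexHull ℝ _)
    refine convexHull_min (union_subset ?_ ?_) hconv
    · exact goldstine.trans (closure_mono (subset_union_left.trans (subset_convexHull ℝ _)))
    · exact (subset_union_right.trans (subset_convexHull ℝ _)).trans subset_closure

/-- Let `B ⊂ X` be a convex, symmetric, norm-compact set such that
`D = conv(B_X ∪ B)` is the closed unit ball of an equivalent norm `N` on `X`. Then the
closed unit ball of the bidual norm `N**` on `X**` (i.e., the weak* closure of the
canonical image of `D` in `X**`) equals `conv(B_{X**} ∪ B)`, where `B` and the bidual unit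
ball are viewed inside `X**` (with its weak* topology). -/
theorem bidual_ball_of_renorming {X : Type*} [NormedAddCommGroup X] [NormedSpace ℝ X]
    [CompleteSpace X] (B : Set X) (hBconv : Convex ℝ B) (hBsym : ∀ x ∈ B, -x ∈ B)
    (hBcpt : IsCompact B) (N : X → ℝ) (hN : IsEquivNorm N)
    (hD : {x : X | N x ≤ 1} = convexHull ℝ (Metric.closedBall 0 1 ∪ B)) :
    closure ((fun x : X => StrongDual.toWeakDual (inclusionInDoubleDual ℝ X x)) ''
        {x : X | N x ≤ 1}) =
      convexHull ℝ
        ((⇑StrongDual.toWeakDual '' Metric.closedBall (0 : StrongDual ℝ (StrongDual ℝ X)) 1) ∪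
          ((fun x : X => StrongDual.toWeakDual (inclusionInDoubleDual ℝ X x)) '' B)) :=
  bidual_ball_of_renorming_general B hBconv hBcpt N hD
end
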